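/- arXiv:2109.02798 — 3 statements merged into one kernel-verified Lean document; each statement's English description precedes it below -/
import Mathlib

section
/- Let 0 < α < 1, T > 0, N a positive integer, and r ≥ 1, and let d_{n,k} be the L1 weights on the graded mesh t_n = T(n/N)^r. Then the weights are monotone: d_{n,k+1} ≤ d_{n,k} for all 1 ≤ k ≤ n − 1 ≤ N − 1. -/
noncomputable section

/-- The graded mesh `t_n = T (n/N)^r` on `[0,T]`. -/
def gmesh (T r : ℝ) (N n : ℕ) : ℝ := T * ((n : ℝ) / (N : ℝ)) ^ r

/-- The step sizes `τ_n = t_n - t_{n-1}` of the graded mesh. -/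
def gstep (T r : ℝ) (N n : ℕ) : ℝ := gmesh T r N n - gmesh T r N (n - 1)

/-- The L1 weights
`d_{n,k} = ((t_n − t_{n−k})^{1−α} − (t_n − t_{n−k+1})^{1−α})/τ_{n−k+1}`. -/
def L1w (α T r : ℝ) (N n k : ℕ) : ℝ :=
  ((gmesh T r N n - gmesh T r N (n - k)) ^ (1 - α)
      - (gmesh T r N n - gmesh T r N (n - k + 1)) ^ (1 - α)) / gstep T r N (n - k + 1)

lemma gmesh_lt (T r : ℝ) (N : ℕ) (hT : 0 < T) (hr : 0 < r) (hN : 0 < N)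
    {m m' : ℕ} (h : m < m') : gmesh T r N m < gmesh T r N m' := by
  unfold gmesh
  have hN' : (0:ℝ) < (N:ℝ) := by exact_mod_cast hN
  apply mul_lt_mul_of_pos_left _ hT
  apply Real.rpow_lt_rpow (by positivity) _ hr
  have hm : (m:ℝ) < (m':ℝ) := by exact_mod_cast h
  rw [div_lt_div_iff₀ hN' hN']
  nlinarith

lemma concave_aux {c p : ℝ} (hp₀ : 0 ≤ p) (hp₁ : p ≤ 1) :
    ConcaveOn ℝ (Set.Iic c) (fun x => (c - x) ^ p) := by
  have h := Real.concaveOn_rpow hp₀ hp₁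
  refine ⟨convex_Iic c, ?_⟩
  intro x hx y hy a b ha hb hab
  have hx' : c - x ∈ Set.Ici (0:ℝ) := by
    simp only [Set.mem_Iic] at hx; simp only [Set.mem_Ici]; linarith
  have hy' : c - y ∈ Set.Ici (0:ℝ) := by
    simp only [Set.mem_Iic] at hy; simp only [Set.mem_Ici]; linarith
  have key : c - (a * x + b * y) = a * (c - x) + b * (c - y) := by
    linear_combination -c * hab
  have h2 := h.2 hx' hy' ha hb hab
  simp only [smul_eq_mul] at h2 ⊢
  rw [key]
  exact h2

/-- monotonicity of the L1 weights on the graded mesh: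
`d_{n,k+1} ≤ d_{n,k}` for `1 ≤ k ≤ n − 1 ≤ N − 1`. -/
theorem L1_weights_monotone
    (α T r : ℝ) (N : ℕ) (hα0 : 0 < α) (hα1 : α < 1) (hT : 0 < T) (hr : 1 ≤ r) (hN : 0 < N)
    (n k : ℕ) (hk : 1 ≤ k) (hkn : k + 1 ≤ n) (hnN : n ≤ N) :
    L1w α T r N n (k + 1) ≤ L1w α T r N n k := by
  have hr0 : 0 < r := lt_of_lt_of_le one_pos hr
  set tn := gmesh T r N n with htn
  set a := gmesh T r N (n - k - 1) with hA
  set b := gmesh T r N (n - k) with hB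
  set c := gmesh T r N (n - k + 1) with hC
  have hab : a < b := gmesh_lt T r N hT hr0 hN (by omega)
  have hbc : b < c := gmesh_lt T r N hT hr0 hN (by omega)
  have hc_le : c ≤ tn := by
    rcases eq_or_lt_of_le (show n - k + 1 ≤ n by omega) with h | h
    · rw [hC, htn, h]
    · exact le_of_lt (gmesh_lt T r N hT hr0 hN h)
  have ha_mem : a ∈ Set.Iic tn := by
    simp only [Set.mem_Iic]; linarith
  have hc_mem : c ∈ Set.Iic tn := Set.mem_Iic.mpr hc_le
  have hconc := concave_aux (c := tn) (p := 1 - α) (by linarith) (by linarith)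
  have hslope := hconc.slope_anti_adjacent ha_mem hc_mem hab hbc
  -- rewrite L1w in terms of a, b, c
  have e1 : n - (k + 1) = n - k - 1 := by omega
  have e2 : n - (k + 1) + 1 = n - k := by omega
  have e3 : n - k - 1 = n - k - 1 := rfl
  have e4 : n - k + 1 - 1 = n - k := by omega
  have hL1 : L1w α T r N n (k + 1) = ((tn - a) ^ (1 - α) - (tn - b) ^ (1 - α)) / (b - a) := by
    rw [L1w, e2, e1, gstep]
  have hL2 : L1w α T r N n k = ((tn - b) ^ (1 - α) - (tn - c) ^ (1 - α)) / (c - b) := by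
    rw [L1w, gstep, e4]
  rw [hL1, hL2]
  rw [div_le_div_iff₀ (by linarith) (by linarith)] at hslope ⊢
  nlinarith [hslope]
end
end

section
/- Let 0 < α < 1, T > 0, N a positive integer, and r ≥ 1, and consider the discrete Caputo operator D_N^α built from the L1 weights on the graded mesh t_n = T(n/N)^r. Let H be a real inner product space with inner product (·,·) and norm ‖·‖, and let v^0, v^1, ..., v^N ∈ H. Then the L1 scheme is coercive: (D_N^α v^n, v^n) ≥ (1/2) D_N^α ‖v^n‖², for every n = 1, 2, ..., N, where D_N^α ‖v^n‖² denotes the operator applied to the real sequence (‖v^k‖²)_{k=0}^N. -/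
noncomputable section

/-- The discrete Caputo (L1) operator
`D_N^α v^n = (1/Γ(2−α)) Σ_{k=0}^{n−1} d_{n,n−k} (v^{k+1} − v^k)` for real sequences. -/
def discCaputo (α T r : ℝ) (N : ℕ) (v : ℕ → ℝ) (n : ℕ) : ℝ :=
  (1 / Real.Gamma (2 - α)) * ∑ k ∈ Finset.range n, L1w α T r N n (n - k) * (v (k + 1) - v k)

open RealInnerProductSpace in
/-- The discrete Caputo (L1) operator for sequences in a real inner product space. -/
def discCaputoVec (α T r : ℝ) (N : ℕ) {H : Type*} [NormedAddCommGroup H]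
    [InnerProductSpace ℝ H] (v : ℕ → H) (n : ℕ) : H :=
  (1 / Real.Gamma (2 - α)) • ∑ k ∈ Finset.range n, L1w α T r N n (n - k) • (v (k + 1) - v k)

/-!
The `k`-th weight of `D_N^α v^n` is the slope of `x ↦ x ^ (1 - α)` between `t_n - t_{k+1}` and
`t_n - t_k`; as this function is monotone and concave, the weights are nonnegative and
nondecreasing in `k`. For such weights `w`, polarization gives
`(D v^n, v^n) - ½ D ‖v^n‖² = Γ(2-α)⁻¹ ∑ w_k (c_k - c_{k+1})` with `c_k = ½ ‖v^k - v^n‖² ≥ 0`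
and `c_n = 0`, which is nonnegative by summation by parts.
-/

open Finset RealInnerProductSpace

-- Summation by parts: the left side is `w 0 * c 0 + ∑_{k<n} (w (k+1) - w k) * c (k+1)`.
theorem sum_mul_sub_succ_add_mul_nonneg (w c : ℕ → ℝ) (n : ℕ) (hw₀ : 0 ≤ w 0)
    (hw : ∀ k < n, w k ≤ w (k + 1)) (hc : ∀ k, 0 ≤ c k) :
    0 ≤ ∑ k ∈ range (n + 1), w k * (c k - c (k + 1)) + w n * c (n + 1) := by
  induction n with
  | zero => simpa [mul_sub] using mul_nonneg hw₀ (hc 0)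
  | succ n ih =>
    have hstep : 0 ≤ (w (n + 1) - w n) * c (n + 1) :=
      mul_nonneg (sub_nonneg.2 (hw n n.lt_succ_self)) (hc _)
    rw [sum_range_succ]
    linarith [ih fun k hk => hw k (by omega)]

theorem sum_mul_sub_succ_nonneg (w c : ℕ → ℝ) (n : ℕ) (hw₀ : ∀ k < n, 0 ≤ w k)
    (hw : ∀ k, k + 1 < n → w k ≤ w (k + 1)) (hc : ∀ k, 0 ≤ c k) (hcn : c n = 0) :
    0 ≤ ∑ k ∈ range n, w k * (c k - c (k + 1)) := by
  cases n with
  | zero => simp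
  | succ m =>
    simpa [hcn] using sum_mul_sub_succ_add_mul_nonneg w c m (hw₀ 0 m.succ_pos)
      (fun k hk => hw k (by omega)) hc

section InnerProductSpace

variable {H : Type*} [NormedAddCommGroup H] [InnerProductSpace ℝ H]

theorem inner_sub_sub_half_norm_sq_sub (a b z : H) :
    ⟪a - b, z⟫ - 1 / 2 * (‖a‖ ^ 2 - ‖b‖ ^ 2) = ‖b - z‖ ^ 2 / 2 - ‖a - z‖ ^ 2 / 2 := by
  rw [inner_sub_left, norm_sub_sq_real, norm_sub_sq_real]
  ring

theorem half_sum_mul_norm_sq_sub_le_inner_sum_smul_sub (w : ℕ → ℝ) (v : ℕ → H) (n : ℕ)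
    (hw₀ : ∀ k < n, 0 ≤ w k) (hw : ∀ k, k + 1 < n → w k ≤ w (k + 1)) :
    1 / 2 * ∑ k ∈ range n, w k * (‖v (k + 1)‖ ^ 2 - ‖v k‖ ^ 2) ≤
      ⟪∑ k ∈ range n, w k • (v (k + 1) - v k), v n⟫ := by
  have hdefect : ⟪∑ k ∈ range n, w k • (v (k + 1) - v k), v n⟫ -
        1 / 2 * ∑ k ∈ range n, w k * (‖v (k + 1)‖ ^ 2 - ‖v k‖ ^ 2) =
      ∑ k ∈ range n, w k * (‖v k - v n‖ ^ 2 / 2 - ‖v (k + 1) - v n‖ ^ 2 / 2) := by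
    simp only [sum_inner, real_inner_smul_left, mul_sum, ← sum_sub_distrib,
      ← inner_sub_sub_half_norm_sq_sub]
    exact sum_congr rfl fun k _ => by ring
  have hpos := sum_mul_sub_succ_nonneg w (fun k => ‖v k - v n‖ ^ 2 / 2) n hw₀ hw
    (fun k => by positivity) (by simp)
  linarith

end InnerProductSpace

theorem ConcaveOn.slope_sub_succ_le {f : ℝ → ℝ} {t : ℕ → ℝ}
    (hf : ConcaveOn ℝ (Set.Ici 0) f) (ht : StrictMono t) {n k : ℕ} (hk : k + 2 ≤ n) :
    slope f (t n - t (k + 1)) (t n - t k) ≤ slope f (t n - t (k + 2)) (t n - t (k + 1)) := by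
  have h₀ := ht (show k < k + 1 by omega)
  have h₁ := ht (show k + 1 < k + 2 by omega)
  have h₂ := ht.monotone hk
  rw [slope_def_field, slope_def_field]
  exact hf.slope_anti_adjacent (Set.mem_Ici.2 (by linarith)) (Set.mem_Ici.2 (by linarith))
    (by linarith) (by linarith)

theorem gmesh_strictMono {T r : ℝ} {N : ℕ} (hT : 0 < T) (hr : 0 < r) (hN : 0 < N) :
    StrictMono (gmesh T r N) := fun a b hab => by
  unfold gmesh
  gcongr

theorem L1w_sub_eq_slope (α T r : ℝ) (N : ℕ) {n k : ℕ} (hk : k < n) :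
    L1w α T r N n (n - k) = slope (fun x : ℝ => x ^ (1 - α))
      (gmesh T r N n - gmesh T r N (k + 1)) (gmesh T r N n - gmesh T r N k) := by
  rw [slope_def_field, L1w, gstep, show n - (n - k) = k by omega, Nat.add_sub_cancel]
  ring_nf

open RealInnerProductSpace in
theorem L1_coercivity_general
    (α T r : ℝ) (N : ℕ) (hα0 : 0 < α) (hα1 : α < 1) (hT : 0 < T) (hr : 1 ≤ r) (hN : 0 < N)
    {H : Type*} [NormedAddCommGroup H] [InnerProductSpace ℝ H]
    (v : ℕ → H) (n : ℕ) :
    ⟪discCaputoVec α T r N v n, v n⟫ ≥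
      (1 / 2) * discCaputo α T r N (fun k => ‖v k‖ ^ 2) n := by
  have ht := gmesh_strictMono hT (by linarith) hN
  have hw₀ : ∀ k < n, 0 ≤ L1w α T r N n (n - k) := fun k hk => by
    rw [L1w_sub_eq_slope α T r N hk]
    exact (Real.monotoneOn_rpow_Ici_of_exponent_nonneg (by linarith)).slope_nonneg
      (sub_nonneg.2 (ht.monotone hk)) (sub_nonneg.2 (ht.monotone hk.le))
  have hw : ∀ k, k + 1 < n →
      L1w α T r N n (n - k) ≤ L1w α T r N n (n - (k + 1)) := fun k hk => by
    rw [L1w_sub_eq_slope α T r N (by omega), L1w_sub_eq_slope α T r N hk]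
    exact (Real.concaveOn_rpow (by linarith) (by linarith)).slope_sub_succ_le ht hk
  have hΓ : 0 ≤ 1 / Real.Gamma (2 - α) :=
    one_div_nonneg.2 (Real.Gamma_pos_of_pos (by linarith)).le
  rw [discCaputoVec, discCaputo, real_inner_smul_left, ge_iff_le, mul_left_comm]
  exact mul_le_mul_of_nonneg_left
    (half_sum_mul_norm_sq_sub_le_inner_sum_smul_sub _ v n hw₀ hw) hΓ

open RealInnerProductSpace in
/-- coercivity of the L1 scheme:
`(D_N^α v^n, v^n) ≥ (1/2) D_N^α ‖v^n‖²` for `n = 1, …, N`. -/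
theorem L1_coercivity
    (α T r : ℝ) (N : ℕ) (hα0 : 0 < α) (hα1 : α < 1) (hT : 0 < T) (hr : 1 ≤ r) (hN : 0 < N)
    {H : Type*} [NormedAddCommGroup H] [InnerProductSpace ℝ H]
    (v : ℕ → H) (n : ℕ) (hn1 : 1 ≤ n) (hnN : n ≤ N) :
    ⟪discCaputoVec α T r N v n, v n⟫ ≥
      (1 / 2) * discCaputo α T r N (fun k => ‖v k‖ ^ 2) n :=
  L1_coercivity_general α T r N hα0 hα1 hT hr hN v n
end
end

section
/- Let H be a finite-dimensional real Hilbert space with scalar product (·,·) and norm ‖·‖_H, and let S : H → H be a continuous map with the following property: there exists ρ > 0 such that (S(v), v) > 0 for all v ∈ H with ‖v‖_H = ρ. Then there exists an element w ∈ H such that S(w) = 0 and ‖w‖_H ≤ ρ. -/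
/-!
If `S` had no zero in the ball, a smooth approximation `P` of `S` would have none either and would
still point outwards on the sphere, so `x ↦ -(ρ / ‖P x‖) • P x` would be a `C¹` self-map of the
ball without fixed point: a fixed point `x` lies on the sphere and has `⟪P x, x⟫ < 0`.

Brouwer's theorem for `C¹` maps is proved by the volume argument. A fixed-point-free map `g`
yields a `C¹` retraction `r` of the ball onto the sphere, by following the ray from `g x` through
`x`. For small `t` the map `x ↦ x + t • (r x - x)` is a diffeomorphism of the ball, so
`∫ det (1 + t • (Dr - 1))` over the ball is its volume. This integral is a polynomial in `t`, so it
is the volume also at `t = 1`, where the integrand `det Dr` vanishes because `r` takes values in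
the sphere.
-/

open Metric MeasureTheory Set Polynomial Topology
open scoped RealInnerProductSpace

theorem LinearMap.exists_natDegree_le_eval_eq_det_one_add_smul {K V : Type*} [Field K]
    [AddCommGroup V] [Module K V] [FiniteDimensional K V] (L : V →ₗ[K] V) :
    ∃ p : K[X], p.natDegree ≤ Module.finrank K V ∧
      ∀ t : K, p.eval t = LinearMap.det (1 + t • L) := by
  let b := Module.finBasis K V
  let M := LinearMap.toMatrix b b L
  refine ⟨Matrix.det ((X : K[X]) • M.map C + (1 : Matrix _ _ K).map C), ?_, fun t => ?_⟩
  · simpa using natDegree_det_X_add_C_le M 1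
  · rw [← LinearMap.det_toMatrix b, ← coe_evalRingHom, RingHom.map_det]
    congr 1
    ext i j
    simp [M, Matrix.one_apply, apply_ite (eval t), mul_comm t, add_comm]

theorem exists_eval_eq_integral_of_natDegree_le {α : Type*} [MeasurableSpace α] {μ : Measure α}
    {n : ℕ} {F : α → ℝ → ℝ} (hF : ∀ x, ∃ p : ℝ[X], p.natDegree ≤ n ∧ ∀ t, p.eval t = F x t)
    (hint : ∀ t, Integrable (F · t) μ) :
    ∃ Q : ℝ[X], ∀ t, Q.eval t = ∫ x, F x t ∂μ := by
  let s : Finset ℝ := (Finset.range (n + 1)).image Nat.cast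
  have hs : s.card = n + 1 := Finset.card_image_of_injective _ Nat.cast_injective |>.trans (by simp)
  have hinterp : ∀ x t, F x t = ∑ i ∈ s, F x i * (Lagrange.basis s id i).eval t := by
    intro x t
    obtain ⟨p, hpn, hp⟩ := hF x
    have hdeg : p.degree < s.card := by
      rw [hs]
      exact degree_lt_iff_coeff_zero _ _ |>.mpr fun m hm =>
        coeff_eq_zero_of_natDegree_lt (by exact_mod_cast hpn.trans_lt (by exact_mod_cast hm))
    rw [← hp, Lagrange.eq_interpolate (injOn_id _) hdeg, Lagrange.interpolate_apply, eval_finsetSum]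
    simp [hp]
  refine ⟨∑ i ∈ s, C (∫ x, F x i ∂μ) * Lagrange.basis s id i, fun t => ?_⟩
  simp_rw [hinterp _ t]
  rw [integral_finsetSum _ fun i _ => (hint i).mul_const _, eval_finsetSum]
  simp [integral_mul_const]

theorem IsCompact.exists_pos_forall_le {X : Type*} [TopologicalSpace X] {K : Set X} {f : X → ℝ}
    (hK : IsCompact K) (hf : ContinuousOn f K) (hpos : ∀ x ∈ K, 0 < f x) :
    ∃ c > 0, ∀ x ∈ K, c ≤ f x := by
  rcases K.eq_empty_or_nonempty with rfl | hne
  · exact ⟨1, one_pos, by simp⟩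
  obtain ⟨x₀, hx₀, hmin⟩ := hK.exists_isMinOn hne hf
  exact ⟨f x₀, hpos x₀ hx₀, fun x hx => hmin hx⟩

theorem injOn_add_of_norm_sub_le {G : Type*} [NormedAddCommGroup G] {s : Set G} {g : G → G}
    {k : ℝ} (hk : k < 1) (hg : ∀ x ∈ s, ∀ y ∈ s, ‖g y - g x‖ ≤ k * ‖y - x‖) :
    InjOn (fun x => x + g x) s := by
  intro x hx y hy hxy
  have hyx : y - x = g x - g y := by
    simp only at hxy
    rw [sub_eq_sub_iff_add_eq_add, ← hxy, add_comm]
  have hle : ‖y - x‖ ≤ k * ‖y - x‖ := by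
    simpa [hyx, norm_sub_rev] using hg x hx y hy
  have hzero : ‖y - x‖ = 0 := by nlinarith [norm_nonneg (y - x)]
  exact (sub_eq_zero.mp (norm_eq_zero.mp hzero)).symm

section NormedSpace

variable {E : Type*} [NormedAddCommGroup E] [NormedSpace ℝ E] [FiniteDimensional ℝ E]

theorem ContinuousLinearMap.det_one_add_pos_of_norm_lt_one {T : E →L[ℝ] E} (hT : ‖T‖ < 1) :
    0 < (1 + T).det := by
  have hne : ∀ s ∈ Icc (0 : ℝ) 1, (1 + s • T).det ≠ 0 := by
    intro s hs
    have hsT : ‖-(s • T)‖ < 1 := by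
      rw [norm_neg, norm_smul, Real.norm_of_nonneg hs.1]
      nlinarith [norm_nonneg T, hs.2]
    have hunit : IsUnit (1 + s • T) := by
      simpa using (Units.oneSub (-(s • T)) hsT).isUnit
    exact ((hunit.map ContinuousLinearMap.toLinearMapRingHom).map LinearMap.det).ne_zero
  by_contra! hle
  have hcont : ContinuousOn (fun s : ℝ => (1 + s • T).det) (Icc 0 1) :=
    (ContinuousLinearMap.continuous_det.comp (by fun_prop)).continuousOn
  obtain ⟨s, hs, hs0⟩ := intermediate_value_Icc' zero_le_one hcont
    ⟨by simpa using hle, by simp [ContinuousLinearMap.det]⟩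
  exact hne s hs hs0

theorem HasStrictFDerivAt.image_mem_nhds_of_det_ne_zero {f : E → E} {f' : E →L[ℝ] E} {x : E}
    {s : Set E} (hf : HasStrictFDerivAt f f' x) (hdet : f'.det ≠ 0) (hs : s ∈ 𝓝 x) :
    f '' s ∈ 𝓝 (f x) := by
  have hf' : HasStrictFDerivAt f (f'.toContinuousLinearEquivOfDetNeZero hdet : E →L[ℝ] E) x := by
    rwa [ContinuousLinearMap.coe_toContinuousLinearEquivOfDetNeZero]
  rw [← hf'.map_nhds_eq_of_equiv]
  exact Filter.image_mem_map hs

theorem HasStrictFDerivAt.det_eq_zero_of_mapsTo {f : E → E} {f' : E →L[ℝ] E} {x : E}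
    {s t : Set E} (hf : HasStrictFDerivAt f f' x) (hs : s ∈ 𝓝 x) (hst : MapsTo f s t)
    (ht : interior t = ∅) : f'.det = 0 := by
  by_contra hdet
  have : t ∈ 𝓝 (f x) := Filter.mem_of_superset (hf.image_mem_nhds_of_det_ne_zero hdet hs)
    hst.image_subset
  simpa [ht] using mem_interior_iff_mem_nhds.mpr this

theorem image_closedBall_eq_of_isOpen_image_ball {f : E → E} {c : E} {ρ : ℝ} (hρ : 0 < ρ)
    (hf : ContinuousOn f (closedBall c ρ)) (hmaps : MapsTo f (closedBall c ρ) (closedBall c ρ))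
    (hid : ∀ x ∈ sphere c ρ, f x = x) (hopen : IsOpen (f '' ball c ρ)) :
    f '' closedBall c ρ = closedBall c ρ := by
  have hclosed : IsClosed (f '' closedBall c ρ) :=
    ((isCompact_closedBall c ρ).image_of_continuousOn hf).isClosed
  have hsub : f '' ball c ρ ⊆ ball c ρ := by
    have := hopen.subset_interior_iff.mpr
      ((image_mono ball_subset_closedBall).trans hmaps.image_subset)
    rwa [interior_closedBall c hρ.ne'] at this
  -- `f '' ball` is open and closed in the connected `ball`, since `f` fixes the sphere
  have hcover : ball c ρ ⊆ f '' ball c ρ ∪ (f '' closedBall c ρ)ᶜ := by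
    rintro y hy
    by_cases hyB : y ∈ f '' closedBall c ρ
    · obtain ⟨x, hx, rfl⟩ := hyB
      rcases (mem_closedBall.mp hx).lt_or_eq with hlt | heq
      · exact Or.inl (mem_image_of_mem f (mem_ball.mpr hlt))
      · rw [hid x (mem_sphere.mpr heq)] at hy
        exact absurd heq (mem_ball.mp hy).ne
    · exact Or.inr hyB
  have hball : ball c ρ ⊆ f '' ball c ρ :=
    isPreconnected_ball.subset_left_of_subset_union hopen hclosed.isOpen_compl
      (disjoint_compl_right_iff_subset.mpr (image_mono ball_subset_closedBall)) hcover
      ⟨f c, hsub (mem_image_of_mem f (mem_ball_self hρ)), mem_image_of_mem f (mem_ball_self hρ)⟩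
  refine hmaps.image_subset.antisymm ?_
  calc closedBall c ρ = closure (ball c ρ) := (closure_ball c hρ.ne').symm
    _ ⊆ f '' closedBall c ρ :=
      closure_minimal (hball.trans (image_mono ball_subset_closedBall)) hclosed

theorem setIntegral_det_one_add_fderiv_eq_measureReal [MeasurableSpace E] [BorelSpace E]
    (μ : Measure E) [μ.IsAddHaarMeasure] {g : E → E} {c : E} {ρ k : ℝ} (hρ : 0 < ρ)
    (hg : ∀ x ∈ closedBall c ρ, ContDiffAt ℝ 1 g x) (hk : k < 1)
    (hgk : ∀ x ∈ closedBall c ρ, ‖fderiv ℝ g x‖ ≤ k)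
    (hmaps : MapsTo (fun x => x + g x) (closedBall c ρ) (closedBall c ρ))
    (hg0 : ∀ x ∈ sphere c ρ, g x = 0) :
    ∫ x in closedBall c ρ, (1 + fderiv ℝ g x).det ∂μ = μ.real (closedBall c ρ) := by
  have hf' : ∀ x ∈ closedBall c ρ,
      HasStrictFDerivAt (fun x => x + g x) (1 + fderiv ℝ g x) x :=
    fun x hx => (hasStrictFDerivAt_id x).add ((hg x hx).hasStrictFDerivAt one_ne_zero)
  have hdet : ∀ x ∈ closedBall c ρ, 0 < (1 + fderiv ℝ g x).det :=
    fun x hx => ContinuousLinearMap.det_one_add_pos_of_norm_lt_one ((hgk x hx).trans_lt hk)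
  have hinj : InjOn (fun x => x + g x) (closedBall c ρ) :=
    injOn_add_of_norm_sub_le hk fun x hx y hy =>
      (convex_closedBall c ρ).norm_image_sub_le_of_norm_fderiv_le
        (fun z hz => (hg z hz).differentiableAt one_ne_zero) hgk hx hy
  have himage : (fun x => x + g x) '' closedBall c ρ = closedBall c ρ := by
    refine image_closedBall_eq_of_isOpen_image_ball hρ
      (fun x hx => (hf' x hx).continuousAt.continuousWithinAt) hmaps
      (fun x hx => by simp [hg0 x hx]) (isOpen_iff_mem_nhds.mpr ?_)
    rintro _ ⟨x, hx, rfl⟩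
    exact (hf' x (ball_subset_closedBall hx)).image_mem_nhds_of_det_ne_zero
      (hdet x (ball_subset_closedBall hx)).ne' (isOpen_ball.mem_nhds hx)
  have hcov := integral_image_eq_integral_abs_det_fderiv_smul μ measurableSet_closedBall
    (fun x hx => (hf' x hx).hasFDerivAt.hasFDerivWithinAt) hinj fun _ => (1 : ℝ)
  rw [himage] at hcov
  simp only [integral_const, measureReal_restrict_apply_univ, smul_eq_mul, mul_one] at hcov
  rw [hcov]
  exact setIntegral_congr_fun measurableSet_closedBall fun x hx => (abs_of_pos (hdet x hx)).symm

theorem setIntegral_det_fderiv_eq_zero_of_mapsTo_sphere [MeasurableSpace E] [BorelSpace E]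
    (μ : Measure E) [μ.IsAddHaarMeasure] {r : E → E} {c : E} {ρ : ℝ} (hρ : 0 < ρ)
    (hr : ∀ x ∈ closedBall c ρ, ContDiffAt ℝ 1 r x)
    (hmaps : MapsTo r (closedBall c ρ) (sphere c ρ)) :
    ∫ x in closedBall c ρ, (fderiv ℝ r x).det ∂μ = 0 := by
  refine integral_eq_zero_of_ae ((ae_restrict_iff' measurableSet_closedBall).mpr ?_)
  filter_upwards [measure_eq_zero_iff_ae_notMem.mp (Measure.addHaar_sphere_of_ne_zero μ c hρ.ne')]
    with x hxS hxB
  have hx : x ∈ ball c ρ := by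
    rw [← closedBall_sdiff_sphere]; exact ⟨hxB, hxS⟩
  exact ((hr x (ball_subset_closedBall hx)).hasStrictFDerivAt one_ne_zero).det_eq_zero_of_mapsTo
    (isOpen_ball.mem_nhds hx) (hmaps.mono_left ball_subset_closedBall) (interior_sphere c hρ.ne')

theorem setIntegral_det_one_add_smul_fderiv_sub_one_eq_measureReal [MeasurableSpace E]
    [BorelSpace E] (μ : Measure E) [μ.IsAddHaarMeasure] {r : E → E} {c : E} {ρ K t : ℝ}
    (hρ : 0 < ρ) (hr : ∀ x ∈ closedBall c ρ, ContDiffAt ℝ 1 r x)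
    (hmaps : MapsTo r (closedBall c ρ) (closedBall c ρ)) (hid : ∀ x ∈ sphere c ρ, r x = x)
    (hK : ∀ x ∈ closedBall c ρ, ‖fderiv ℝ r x - 1‖ ≤ K) (ht : t ∈ Icc 0 (K + 1)⁻¹) :
    ∫ x in closedBall c ρ, (1 + t • (fderiv ℝ r x - 1)).det ∂μ = μ.real (closedBall c ρ) := by
  obtain ⟨ht0, htK⟩ := ht
  have hK0 : 0 ≤ K := (norm_nonneg _).trans (hK c (mem_closedBall_self hρ.le))
  have htK1 : t * K < 1 :=
    calc t * K ≤ (K + 1)⁻¹ * K := by gcongr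
      _ < 1 := by rw [inv_mul_lt_iff₀ (by positivity)]; linarith
  have ht1 : t ≤ 1 := htK.trans (inv_le_one_of_one_le₀ (by linarith))
  have hfd : ∀ x ∈ closedBall c ρ,
      fderiv ℝ (fun y => t • (r y - y)) x = t • (fderiv ℝ r x - 1) := fun x hx =>
    ((((hr x hx).differentiableAt one_ne_zero).hasFDerivAt.sub (hasFDerivAt_id x)).const_smul
      t).fderiv
  rw [← setIntegral_det_one_add_fderiv_eq_measureReal μ (g := fun y => t • (r y - y)) hρ
    (fun x hx => ((hr x hx).sub contDiffAt_id).const_smul t) htK1 ?_ ?_ ?_]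
  · exact setIntegral_congr_fun measurableSet_closedBall fun x hx => by rw [hfd x hx]
  · intro x hx
    rw [hfd x hx, norm_smul, Real.norm_of_nonneg ht0]
    exact mul_le_mul_of_nonneg_left (hK x hx) ht0
  · intro x hx
    have hcomb : x + t • (r x - x) = (1 - t) • x + t • r x := by module
    simp only [hcomb]
    exact convex_closedBall c ρ hx (hmaps hx) (by linarith) ht0 (by ring)
  · intro x hx
    simp [hid x hx]

theorem not_mapsTo_sphere_of_contDiffAt {r : E → E} {c : E} {ρ : ℝ} (hρ : 0 < ρ)
    (hr : ∀ x ∈ closedBall c ρ, ContDiffAt ℝ 1 r x) (hid : ∀ x ∈ sphere c ρ, r x = x) :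
    ¬ MapsTo r (closedBall c ρ) (sphere c ρ) := by
  intro hmaps
  borelize E
  let μ : Measure E := .addHaar
  have hA : ContinuousOn (fun x => fderiv ℝ r x - 1) (closedBall c ρ) := fun x hx =>
    ((hr x hx).continuousAt_fderiv one_ne_zero).continuousWithinAt.sub continuousWithinAt_const
  obtain ⟨K, hK⟩ := (isCompact_closedBall c ρ).exists_bound_of_continuousOn hA
  have hK0 : 0 ≤ K := (norm_nonneg _).trans (hK c (mem_closedBall_self hρ.le))
  obtain ⟨Q, hQ⟩ := exists_eval_eq_integral_of_natDegree_le (μ := μ.restrict (closedBall c ρ))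
    (F := fun x t => (1 + t • (fderiv ℝ r x - 1)).det)
    (fun x => LinearMap.exists_natDegree_le_eval_eq_det_one_add_smul _)
    fun t => (ContinuousLinearMap.continuous_det.comp_continuousOn
      (continuousOn_const.add (hA.const_smul t))).integrableOn_compact (isCompact_closedBall c ρ)
  have hQ' : Q = C (μ.real (closedBall c ρ)) :=
    eq_of_infinite_eval_eq _ _ ((Icc_infinite (inv_pos.mpr (by positivity : 0 < K + 1))).mono
      fun t ht => by
        simp [hQ, setIntegral_det_one_add_smul_fderiv_sub_one_eq_measureReal μ hρ hr
          (hmaps.mono_right sphere_subset_closedBall) hid hK ht])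
  have hQ1 := hQ 1
  simp only [hQ', eval_C, one_smul, add_sub_cancel] at hQ1
  rw [setIntegral_det_fderiv_eq_zero_of_mapsTo_sphere μ hρ hr hmaps] at hQ1
  exact (ENNReal.toReal_pos (measure_closedBall_pos μ c hρ).ne'
    measure_closedBall_lt_top.ne).ne' hQ1

end NormedSpace

section InnerProductSpace

variable {F : Type*} [NormedAddCommGroup F] [InnerProductSpace ℝ F]

theorem inner_sub_pos_of_norm_le_of_ne {x y : F} (hyx : ‖y‖ ≤ ‖x‖) (hne : y ≠ x) :
    0 < ⟪x, x - y⟫ := by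
  have hsq : 0 < ‖x - y‖ ^ 2 := by
    have := norm_pos_iff.mpr (sub_ne_zero.mpr hne.symm)
    positivity
  have hinner : 2 * ⟪x, x - y⟫ = ‖x - y‖ ^ 2 + (‖x‖ ^ 2 - ‖y‖ ^ 2) := by
    rw [norm_sub_sq_real, inner_sub_right, real_inner_self_eq_norm_sq]
    ring
  nlinarith [norm_nonneg y]

noncomputable def sphereHitDiscr (ρ : ℝ) (x u : F) : ℝ :=
  ⟪x, u⟫ ^ 2 - ‖u‖ ^ 2 * (‖x‖ ^ 2 - ρ ^ 2)

/-- The larger root `τ` of the quadratic equation `‖x + τ • u‖ ^ 2 = ρ ^ 2`, whose discriminant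
is `4 * sphereHitDiscr ρ x u`. -/
noncomputable def sphereHitTime (ρ : ℝ) (x u : F) : ℝ :=
  (-⟪x, u⟫ + √(sphereHitDiscr ρ x u)) / ‖u‖ ^ 2

theorem sphereHitDiscr_pos {ρ : ℝ} {x u : F} (hu : u ≠ 0) (hx : ‖x‖ ≤ ρ)
    (hxu : ‖x‖ = ρ → 0 < ⟪x, u⟫) : 0 < sphereHitDiscr ρ x u := by
  have hu2 : 0 < ‖u‖ ^ 2 := by have := norm_pos_iff.mpr hu; positivity
  unfold sphereHitDiscr
  rcases hx.lt_or_eq with hlt | heq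
  · have : ‖x‖ ^ 2 < ρ ^ 2 := by gcongr
    nlinarith [sq_nonneg ⟪x, u⟫]
  · rw [heq, sub_self, mul_zero, sub_zero]
    exact pow_pos (hxu heq) 2

theorem norm_add_sphereHitTime_smul {ρ : ℝ} (hρ : 0 ≤ ρ) {x u : F} (hu : u ≠ 0)
    (hD : 0 ≤ sphereHitDiscr ρ x u) : ‖x + sphereHitTime ρ x u • u‖ = ρ := by
  set τ := sphereHitTime ρ x u
  have hu2 : ‖u‖ ^ 2 ≠ 0 := by have := norm_pos_iff.mpr hu; positivity
  have hτ : τ * ‖u‖ ^ 2 = -⟪x, u⟫ + √(sphereHitDiscr ρ x u) := div_mul_cancel₀ _ hu2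
  have hsqrt := Real.sq_sqrt hD
  have hexpand : ‖x + τ • u‖ ^ 2 = ‖x‖ ^ 2 + 2 * τ * ⟪x, u⟫ + τ ^ 2 * ‖u‖ ^ 2 := by
    rw [norm_add_sq_real, real_inner_smul_right, norm_smul, Real.norm_eq_abs, mul_pow, sq_abs]
    ring
  have hDiscr : sphereHitDiscr ρ x u = ⟪x, u⟫ ^ 2 - ‖u‖ ^ 2 * (‖x‖ ^ 2 - ρ ^ 2) := rfl
  have hsq : ‖u‖ ^ 2 * (‖x + τ • u‖ ^ 2 - ρ ^ 2) = 0 := by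
    rw [hexpand]
    linear_combination (τ * ‖u‖ ^ 2 + ⟪x, u⟫ + √(sphereHitDiscr ρ x u)) * hτ + hsqrt + hDiscr
  have := (mul_eq_zero.mp hsq).resolve_left hu2
  exact (sq_eq_sq₀ (norm_nonneg _) hρ).mp (sub_eq_zero.mp this)

theorem sphereHitTime_eq_zero {ρ : ℝ} {x u : F} (hx : ‖x‖ = ρ) (hxu : 0 ≤ ⟪x, u⟫) :
    sphereHitTime ρ x u = 0 := by
  simp [sphereHitTime, sphereHitDiscr, hx, Real.sqrt_sq hxu]

theorem ContDiffAt.sphereHitTime {G : Type*} [NormedAddCommGroup G] [NormedSpace ℝ G]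
    {n : WithTop ℕ∞} {f g : G → F} {x : G} {ρ : ℝ} (hf : ContDiffAt ℝ n f x)
    (hg : ContDiffAt ℝ n g x) (hgx : g x ≠ 0) (hD : 0 < sphereHitDiscr ρ (f x) (g x)) :
    ContDiffAt ℝ n (fun y => sphereHitTime ρ (f y) (g y)) x := by
  have hDiscr : ContDiffAt ℝ n (fun y => sphereHitDiscr ρ (f y) (g y)) x :=
    ((hf.inner ℝ hg).pow 2).sub ((hg.norm_sq ℝ).mul ((hf.norm_sq ℝ).sub contDiffAt_const))
  exact ((hf.inner ℝ hg).neg.add (hDiscr.sqrt hD.ne')).div (hg.norm_sq ℝ)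
    (by have := norm_pos_iff.mpr hgx; positivity)

variable [FiniteDimensional ℝ F]

theorem exists_fixedPoint_of_contDiffAt_of_mapsTo {g : F → F} {ρ : ℝ} (hρ : 0 < ρ)
    (hg : ∀ x ∈ closedBall 0 ρ, ContDiffAt ℝ 1 g x)
    (hmaps : MapsTo g (closedBall 0 ρ) (closedBall 0 ρ)) : ∃ x ∈ closedBall 0 ρ, g x = x := by
  by_contra! hfix
  have hu : ∀ x ∈ closedBall (0 : F) ρ, x - g x ≠ 0 := fun x hx =>
    sub_ne_zero.mpr (hfix x hx).symm
  have hout : ∀ x ∈ closedBall (0 : F) ρ, ‖x‖ = ρ → 0 < ⟪x, x - g x⟫ := fun x hx hxρ =>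
    inner_sub_pos_of_norm_le_of_ne (hxρ ▸ mem_closedBall_zero_iff.mp (hmaps hx)) (hfix x hx)
  have hD : ∀ x ∈ closedBall (0 : F) ρ, 0 < sphereHitDiscr ρ x (x - g x) := fun x hx =>
    sphereHitDiscr_pos (hu x hx) (mem_closedBall_zero_iff.mp hx) (hout x hx)
  -- push each point of the ball away from `g x` until it hits the sphere
  refine not_mapsTo_sphere_of_contDiffAt (c := 0)
    (r := fun x => x + sphereHitTime ρ x (x - g x) • (x - g x)) hρ (fun x hx => ?_)
    (fun x hx => ?_) (fun x hx => ?_)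
  · have hux := contDiffAt_id.sub (hg x hx)
    exact contDiffAt_id.add ((contDiffAt_id.sphereHitTime hux (hu x hx) (hD x hx)).smul hux)
  · have hxρ := mem_sphere_zero_iff_norm.mp hx
    have hxB := sphere_subset_closedBall hx
    simp [sphereHitTime_eq_zero hxρ (hout x hxB hxρ).le]
  · exact mem_sphere_zero_iff_norm.mpr (norm_add_sphereHitTime_smul hρ.le (hu x hx) (hD x hx).le)

theorem exists_eq_zero_norm_le_of_contDiffAt_of_inner_pos {P : F → F} {ρ : ℝ} (hρ : 0 < ρ)
    (hP : ∀ x ∈ closedBall 0 ρ, ContDiffAt ℝ 1 P x) (h : ∀ v : F, ‖v‖ = ρ → 0 < ⟪P v, v⟫) :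
    ∃ w : F, P w = 0 ∧ ‖w‖ ≤ ρ := by
  by_contra! hP0
  have hne : ∀ x ∈ closedBall (0 : F) ρ, P x ≠ 0 := fun x hx hx0 =>
    (hP0 x hx0).not_ge (mem_closedBall_zero_iff.mp hx)
  have hnorm : ∀ x ∈ closedBall (0 : F) ρ, ‖-(ρ / ‖P x‖) • P x‖ = ρ := fun x hx => by
    have := norm_pos_iff.mpr (hne x hx)
    rw [norm_smul, norm_neg, Real.norm_of_nonneg (by positivity), div_mul_cancel₀ _ this.ne']
  obtain ⟨x, hx, hfix⟩ := exists_fixedPoint_of_contDiffAt_of_mapsTo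
    (g := fun x => -(ρ / ‖P x‖) • P x) hρ
    (fun x hx => (contDiffAt_const.div ((hP x hx).norm ℝ (hne x hx))
      (norm_ne_zero_iff.mpr (hne x hx))).neg.smul (hP x hx))
    (fun x hx => mem_closedBall_zero_iff.mpr (hnorm x hx).le)
  have hxρ : ‖x‖ = ρ := hfix ▸ hnorm x hx
  have hinner : ⟪P x, -(ρ / ‖P x‖) • P x⟫ = -(ρ / ‖P x‖ * ‖P x‖ ^ 2) := by
    rw [real_inner_smul_right, real_inner_self_eq_norm_sq, neg_mul]
  rw [hfix] at hinner
  have hPx := norm_pos_iff.mpr (hne x hx)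
  have hpos : 0 < ρ / ‖P x‖ * ‖P x‖ ^ 2 := by positivity
  linarith [h x hxρ]

end InnerProductSpace

/-- a consequence of the Brouwer fixed point theorem.
If `H` is a finite-dimensional real Hilbert space and `S : H → H` is continuous
with `(S(v), v) > 0` for all `v` with `‖v‖ = ρ` (where `ρ > 0`), then there
exists `w` with `S(w) = 0` and `‖w‖ ≤ ρ`. -/
theorem brouwer_zero_of_inner_pos_on_sphere
    {H : Type*} [NormedAddCommGroup H] [InnerProductSpace ℝ H] [FiniteDimensional ℝ H]
    (S : H → H) (hS : Continuous S) (ρ : ℝ) (hρ : 0 < ρ)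
    (h : ∀ v : H, ‖v‖ = ρ → 0 < ⟪S v, v⟫) :
    ∃ w : H, S w = 0 ∧ ‖w‖ ≤ ρ := by
  by_contra! hS0
  obtain ⟨m, hm, hmS⟩ := (isCompact_closedBall (0 : H) ρ).exists_pos_forall_le
    hS.norm.continuousOn fun x hx => norm_pos_iff.mpr fun hx0 =>
      (hS0 x hx0).not_ge (mem_closedBall_zero_iff.mp hx)
  obtain ⟨c, hc, hcS⟩ := (isCompact_sphere (0 : H) ρ).exists_pos_forall_le
    (by fun_prop : Continuous fun v => ⟪S v, v⟫).continuousOn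
    fun v hv => h v (mem_sphere_zero_iff_norm.mp hv)
  set ε := min m (c / ρ)
  have hε : 0 < ε := lt_min hm (div_pos hc hρ)
  obtain ⟨P, hP, hPS, -⟩ := hS.exists_contDiff_approx 1 continuous_const fun _ => hε
  have hPv : ∀ v : H, ‖v‖ = ρ → 0 < ⟪P v, v⟫ := by
    intro v hv
    have hdist : ‖P v - S v‖ * ‖v‖ < c := by
      rw [← dist_eq_norm, hv, ← lt_div_iff₀ hρ]
      exact (hPS v).trans_le (min_le_right _ _)
    have := abs_real_inner_le_norm (P v - S v) v
    rw [inner_sub_left] at this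
    linarith [abs_le.mp this, hcS v (mem_sphere_zero_iff_norm.mpr hv)]
  obtain ⟨w, hPw, hw⟩ := exists_eq_zero_norm_le_of_contDiffAt_of_inner_pos hρ
    (fun x _ => hP.contDiffAt) hPv
  have := hPS w
  rw [hPw, dist_zero_left] at this
  exact (hmS w (mem_closedBall_zero_iff.mpr hw)).not_gt (this.trans_le (min_le_left _ _))
end
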